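/- Fix n ≥ 1 and work in Matrix (Fin (n+1)) (Fin (n+1)) ℂ. For i = 1,…,n let Hᵢ := Eᵢᵢ − E_{i+1,i+1}, Eᵢ⁺ := E_{i,i+1}, Eᵢ⁻ := E_{i+1,i} (single-entry matrices), and let k be the Cartan matrix of sl(n+1), k_{ij} = 2 if i = j, −1 if |i−j| = 1, 0 otherwise. Let Ω ⊆ ℂ be open, let α, β ∈ ℝ with β ≠ 0, and let ψ₁,…,ψₙ, φ₁,…,φₙ : Ω → ℝ be smooth functions with β φⱼ = Σᵢ k_{ji} ψᵢ for all j. Define A_z := Σᵢ (∂_z ψᵢ · Hᵢ + α Eᵢ⁺) and A_z̄ := Σᵢ α e^{β φᵢ} Eᵢ⁻. Then the zero-curvature equation ∂_z A_z̄ − ∂_z̄ A_z + [A_z, A_z̄] = 0 holds on Ω if and only if ∂_z∂_z̄ ψᵢ = α² e^{β φᵢ} for all i; and in that case the Toda field equations ∂_z∂_z̄ φⱼ = (α²/β) Σᵢ k_{ji} e^{β φᵢ} hold for all j. -/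

import Mathlib

open Complex Matrix

noncomputable section

/-- Wirtinger derivative `∂_z` of a ℂ-valued function of one complex variable,
viewed as a function of two real variables:  `∂_z F = ½(∂_x F − i ∂_y F)`. -/
def wdz (f : ℂ → ℂ) (z : ℂ) : ℂ :=
  (1 / 2 : ℂ) * (fderiv ℝ f z 1 - Complex.I * fderiv ℝ f z Complex.I)

/-- Wirtinger derivative `∂_z̄ F = ½(∂_x F + i ∂_y F)`. -/
def wdzbar (f : ℂ → ℂ) (z : ℂ) : ℂ :=
  (1 / 2 : ℂ) * (fderiv ℝ f z 1 + Complex.I * fderiv ℝ f z Complex.I)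

/-- Entrywise Wirtinger derivative `∂_z` for matrix-valued functions. -/
def mdz {n m : Type*} (F : ℂ → Matrix n m ℂ) (z : ℂ) : Matrix n m ℂ :=
  Matrix.of fun i j => wdz (fun w => F w i j) z

/-- Entrywise Wirtinger derivative `∂_z̄` for matrix-valued functions. -/
def mdzbar {n m : Type*} (F : ℂ → Matrix n m ℂ) (z : ℂ) : Matrix n m ℂ :=
  Matrix.of fun i j => wdzbar (fun w => F w i j) z

/-- A matrix-valued function is smooth on a set if each entry is `C^∞`
as a function of the two real variables. -/
def MSmoothOn {n m : Type*} (F : ℂ → Matrix n m ℂ) (Ω : Set ℂ) : Prop :=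
  ∀ i j, ContDiffOn ℝ (⊤ : ℕ∞) (fun z => F z i j) Ω

/-- Chevalley generator `Hᵢ = Eᵢᵢ − E_{i+1,i+1}` of `sl(n+1)`. -/
def todaH (n : ℕ) (i : Fin n) : Matrix (Fin (n + 1)) (Fin (n + 1)) ℂ :=
  Matrix.single i.castSucc i.castSucc 1 - Matrix.single i.succ i.succ 1

/-- Chevalley generator `Eᵢ⁺ = E_{i,i+1}`. -/
def todaEp (n : ℕ) (i : Fin n) : Matrix (Fin (n + 1)) (Fin (n + 1)) ℂ :=
  Matrix.single i.castSucc i.succ 1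

/-- Chevalley generator `Eᵢ⁻ = E_{i+1,i}`. -/
def todaEm (n : ℕ) (i : Fin n) : Matrix (Fin (n + 1)) (Fin (n + 1)) ℂ :=
  Matrix.single i.succ i.castSucc 1

/-- The Cartan matrix of `sl(n+1)`: `2` on the diagonal, `−1` for `|i−j| = 1`, `0` else. -/
def cartan (n : ℕ) (i j : Fin n) : ℝ :=
  if i = j then 2 else if |(i : ℤ) - (j : ℤ)| = 1 then -1 else 0


open Filter in
lemma wdz_congr {f g : ℂ → ℂ} {z : ℂ} (h : f =ᶠ[nhds z] g) : wdz f z = wdz g z := by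
  rw [wdz, wdz, h.fderiv_eq]

open Filter in
lemma wdzbar_congr {f g : ℂ → ℂ} {z : ℂ} (h : f =ᶠ[nhds z] g) : wdzbar f z = wdzbar g z := by
  rw [wdzbar, wdzbar, h.fderiv_eq]

lemma wdz_sum {ι : Type*} (s : Finset ι) (f : ι → ℂ → ℂ) (z : ℂ)
    (hf : ∀ i ∈ s, DifferentiableAt ℝ (f i) z) :
    wdz (fun w => ∑ i ∈ s, f i w) z = ∑ i ∈ s, wdz (f i) z := by
  rw [wdz, fderiv_fun_sum hf]
  simp only [ContinuousLinearMap.coe_sum', Finset.sum_apply, wdz, Finset.mul_sum,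
    Finset.sum_sub_distrib]
  rw [← Finset.sum_sub_distrib, Finset.mul_sum]

lemma wdzbar_sum {ι : Type*} (s : Finset ι) (f : ι → ℂ → ℂ) (z : ℂ)
    (hf : ∀ i ∈ s, DifferentiableAt ℝ (f i) z) :
    wdzbar (fun w => ∑ i ∈ s, f i w) z = ∑ i ∈ s, wdzbar (f i) z := by
  rw [wdzbar, fderiv_fun_sum hf]
  simp only [ContinuousLinearMap.coe_sum', Finset.sum_apply, wdzbar, Finset.mul_sum,
    Finset.sum_add_distrib]
  rw [← Finset.sum_add_distrib, Finset.mul_sum]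

lemma wdz_const_mul {f : ℂ → ℂ} {z : ℂ} (hf : DifferentiableAt ℝ f z) (c : ℂ) :
    wdz (fun w => c * f w) z = c * wdz f z := by
  rw [wdz, wdz, fderiv_const_mul hf c]
  simp only [ContinuousLinearMap.coe_smul', Pi.smul_apply, smul_eq_mul]
  ring

lemma wdzbar_const_mul {f : ℂ → ℂ} {z : ℂ} (hf : DifferentiableAt ℝ f z) (c : ℂ) :
    wdzbar (fun w => c * f w) z = c * wdzbar f z := by
  rw [wdzbar, wdzbar, fderiv_const_mul hf c]
  simp only [ContinuousLinearMap.coe_smul', Pi.smul_apply, smul_eq_mul]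
  ring

lemma wdz_mul_const {f : ℂ → ℂ} {z : ℂ} (hf : DifferentiableAt ℝ f z) (c : ℂ) :
    wdz (fun w => f w * c) z = wdz f z * c := by
  rw [wdz, wdz, fderiv_mul_const hf c]
  simp only [ContinuousLinearMap.coe_smul', Pi.smul_apply, smul_eq_mul]
  ring

lemma wdzbar_mul_const_add_const {f : ℂ → ℂ} {z : ℂ} (hf : DifferentiableAt ℝ f z) (c d : ℂ) :
    wdzbar (fun w => f w * c + d) z = wdzbar f z * c := by
  rw [wdzbar, wdzbar, fderiv_add_const, fderiv_mul_const hf c]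
  simp only [ContinuousLinearMap.coe_smul', Pi.smul_apply, smul_eq_mul]
  ring

lemma wdz_exp_comp (u : ℂ → ℝ) (z : ℂ) (hu : DifferentiableAt ℝ u z) :
    wdz (fun w => ((Real.exp (u w) : ℝ) : ℂ)) z
      = Real.exp (u z) * wdz (fun w => ((u w : ℝ) : ℂ)) z := by
  have h1 : HasFDerivAt (fun w => ((Real.exp (u w) : ℝ) : ℂ))
      (Complex.ofRealCLM.comp (Real.exp (u z) • fderiv ℝ u z)) z :=
    Complex.ofRealCLM.hasFDerivAt.comp z (hu.hasFDerivAt.exp)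
  have h2 : HasFDerivAt (fun w => ((u w : ℝ) : ℂ)) (Complex.ofRealCLM.comp (fderiv ℝ u z)) z :=
    Complex.ofRealCLM.hasFDerivAt.comp z hu.hasFDerivAt
  rw [wdz, wdz, h1.fderiv, h2.fderiv]
  simp only [ContinuousLinearMap.coe_comp', Function.comp_apply,
    ContinuousLinearMap.coe_smul', Pi.smul_apply, smul_eq_mul, Complex.ofRealCLM_apply,
    Complex.ofReal_mul]
  ring

lemma hasFDerivAt_eval (f : ℂ → ℂ) {B : ℂ →L[ℝ] ℂ →L[ℝ] ℂ} {z : ℂ}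
    (hB : HasFDerivAt (fderiv ℝ f) B z) (v : ℂ) :
    HasFDerivAt (fun w => fderiv ℝ f w v)
      ((ContinuousLinearMap.apply ℝ ℂ v).comp B) z :=
  (ContinuousLinearMap.apply ℝ ℂ v).hasFDerivAt.comp z hB

lemma fderiv_wdz_apply (f : ℂ → ℂ) {B : ℂ →L[ℝ] ℂ →L[ℝ] ℂ} {z : ℂ}
    (hB : HasFDerivAt (fderiv ℝ f) B z) (v : ℂ) :
    fderiv ℝ (fun w => wdz f w) z v = (1 / 2 : ℂ) * (B v 1 - Complex.I * B v Complex.I) := by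
  have h : HasFDerivAt (fun w => wdz f w)
      ((1/2 : ℂ) • (((ContinuousLinearMap.apply ℝ ℂ (1:ℂ)).comp B)
        - Complex.I • ((ContinuousLinearMap.apply ℝ ℂ Complex.I).comp B))) z := by
    have h1 := hasFDerivAt_eval f hB 1
    have h2 := (hasFDerivAt_eval f hB Complex.I).const_mul Complex.I
    have h0 := (h1.sub h2).const_mul (1/2 : ℂ)
    refine (h0.congr_of_eventuallyEq ?_).congr_fderiv ?_
    · filter_upwards with w; simp [wdz]
    · ext w; simp [ContinuousLinearMap.smul_comp]
  rw [h.fderiv]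
  simp only [ContinuousLinearMap.smul_apply, ContinuousLinearMap.sub_apply,
    ContinuousLinearMap.coe_comp', Function.comp_apply, ContinuousLinearMap.apply_apply,
    smul_eq_mul]

lemma fderiv_wdzbar_apply (f : ℂ → ℂ) {B : ℂ →L[ℝ] ℂ →L[ℝ] ℂ} {z : ℂ}
    (hB : HasFDerivAt (fderiv ℝ f) B z) (v : ℂ) :
    fderiv ℝ (fun w => wdzbar f w) z v = (1 / 2 : ℂ) * (B v 1 + Complex.I * B v Complex.I) := by
  have h : HasFDerivAt (fun w => wdzbar f w)
      ((1/2 : ℂ) • (((ContinuousLinearMap.apply ℝ ℂ (1:ℂ)).comp B)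
        + Complex.I • ((ContinuousLinearMap.apply ℝ ℂ Complex.I).comp B))) z := by
    have h1 := hasFDerivAt_eval f hB 1
    have h2 := (hasFDerivAt_eval f hB Complex.I).const_mul Complex.I
    have h0 := (h1.add h2).const_mul (1/2 : ℂ)
    refine (h0.congr_of_eventuallyEq ?_).congr_fderiv ?_
    · filter_upwards with w; simp [wdzbar]
    · ext w; simp [ContinuousLinearMap.smul_comp]
  rw [h.fderiv]
  simp only [ContinuousLinearMap.smul_apply, ContinuousLinearMap.add_apply,
    ContinuousLinearMap.coe_comp', Function.comp_apply, ContinuousLinearMap.apply_apply,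
    smul_eq_mul]

lemma diffAt_wdz {f : ℂ → ℂ} {z : ℂ} (hd : DifferentiableAt ℝ (fderiv ℝ f) z) :
    DifferentiableAt ℝ (fun w => wdz f w) z := by
  have h1 := hasFDerivAt_eval f hd.hasFDerivAt 1
  have h2 := (hasFDerivAt_eval f hd.hasFDerivAt Complex.I).const_mul Complex.I
  have h0 := ((h1.sub h2).const_mul (1/2 : ℂ)).differentiableAt
  exact h0.congr_of_eventuallyEq (by filter_upwards with w; simp [wdz])

lemma diffAt_wdzbar {f : ℂ → ℂ} {z : ℂ} (hd : DifferentiableAt ℝ (fderiv ℝ f) z) :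
    DifferentiableAt ℝ (fun w => wdzbar f w) z := by
  have h1 := hasFDerivAt_eval f hd.hasFDerivAt 1
  have h2 := (hasFDerivAt_eval f hd.hasFDerivAt Complex.I).const_mul Complex.I
  have h0 := ((h1.add h2).const_mul (1/2 : ℂ)).differentiableAt
  exact h0.congr_of_eventuallyEq (by filter_upwards with w; simp [wdzbar])

/-- If `f` is `C^∞` on an open set, the mixed Wirtinger derivatives agree there. -/
lemma wdz_wdzbar_comm {f : ℂ → ℂ} {Ω : Set ℂ} (hΩ : IsOpen Ω)
    (hf : ContDiffOn ℝ (⊤ : ℕ∞) f Ω) {z : ℂ} (hz : z ∈ Ω) :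
    wdz (fun w => wdzbar f w) z = wdzbar (fun w => wdz f w) z := by
  have hfat : ContDiffAt ℝ (⊤ : ℕ∞) f z := hf.contDiffAt (hΩ.mem_nhds hz)
  have hd : DifferentiableAt ℝ (fderiv ℝ f) z :=
    (hfat.fderiv_right (m := 1) (WithTop.coe_le_coe.mpr le_top)).differentiableAt one_ne_zero
  have hB : HasFDerivAt (fderiv ℝ f) (fderiv ℝ (fderiv ℝ f) z) z := hd.hasFDerivAt
  have hsymm : fderiv ℝ (fderiv ℝ f) z 1 Complex.I = fderiv ℝ (fderiv ℝ f) z Complex.I 1 :=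
    hfat.isSymmSndFDerivAt (by rw [minSmoothness_of_isRCLikeNormedField]; exact WithTop.coe_le_coe.mpr le_top) 1 Complex.I
  rw [wdz, wdzbar, fderiv_wdzbar_apply f hB 1, fderiv_wdzbar_apply f hB Complex.I,
    fderiv_wdz_apply f hB 1, fderiv_wdz_apply f hB Complex.I]
  rw [hsymm]; ring

lemma cartan_symm (n : ℕ) (i j : Fin n) : cartan n i j = cartan n j i := by
  unfold cartan
  rcases eq_or_ne i j with rfl | h
  · simp
  · rw [if_neg h, if_neg (Ne.symm h), abs_sub_comm]

lemma bracket_Ep_Em (n : ℕ) (i j : Fin n) :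
    todaEp n i * todaEm n j - todaEm n j * todaEp n i
      = if i = j then todaH n i else 0 := by
  rcases eq_or_ne i j with rfl | h
  · rw [if_pos rfl, todaEp, todaEm, todaH, Matrix.single_mul_single_same,
      Matrix.single_mul_single_same, mul_one]
  · have h1 : i.succ ≠ j.succ := by simpa [Fin.ext_iff] using fun H => h (Fin.val_injective H)
    have h2 : j.castSucc ≠ i.castSucc := by
      simpa [Fin.ext_iff] using fun H => h.symm (Fin.val_injective H)
    rw [if_neg h, todaEp, todaEm, Matrix.single_mul_single_of_ne (h := h1),
      Matrix.single_mul_single_of_ne (h := h2), sub_zero]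

lemma bracket_H_Em (n : ℕ) (i j : Fin n) :
    todaH n i * todaEm n j - todaEm n j * todaH n i
      = (-(cartan n i j) : ℂ) • todaEm n j := by
  have hcs : ∀ a b : Fin n, a.castSucc = b.succ ↔ (a : ℕ) = (b : ℕ) + 1 := by
    intro a b; rw [Fin.ext_iff]; simp
  rw [todaH, todaEm, sub_mul, mul_sub]
  rcases eq_or_ne i j with rfl | hij
  · have h1 : i.castSucc ≠ i.succ := by simp [Fin.ext_iff]
    rw [Matrix.single_mul_single_of_ne (h := h1), Matrix.single_mul_single_same,
      Matrix.single_mul_single_same, Matrix.single_mul_single_of_ne (h := h1)]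
    rw [cartan, if_pos rfl]
    push_cast
    ext a b
    simp only [Matrix.sub_apply, Matrix.zero_apply, Matrix.smul_apply, smul_eq_mul,
      Matrix.single, Matrix.of_apply]
    split_ifs <;> norm_num
  · have hcar : cartan n i j = if |(i : ℤ) - (j : ℤ)| = 1 then -1 else 0 := by
      rw [cartan, if_neg hij]
    have hvne : (i : ℕ) ≠ (j : ℕ) := fun H => hij (Fin.val_injective H)
    rcases eq_or_ne (i : ℕ) ((j : ℕ) + 1) with hij1 | hij1
    · have e : j.succ = i.castSucc := ((hcs i j).2 hij1).symm
      rw [e]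
      have h2 : i.succ ≠ i.castSucc := by simp [Fin.ext_iff]
      have h3 : j.castSucc ≠ i.castSucc := by simp [Fin.ext_iff]; omega
      have h4 : j.castSucc ≠ i.succ := by rw [Ne, hcs]; omega
      rw [Matrix.single_mul_single_same, Matrix.single_mul_single_of_ne (h := h2),
        Matrix.single_mul_single_of_ne (h := h3), Matrix.single_mul_single_of_ne (h := h4)]
      rw [hcar, if_pos (by rw [abs_eq (by norm_num : (0:ℤ) ≤ 1)]; omega)]
      push_cast
      ext a b
      simp only [Matrix.sub_apply, Matrix.zero_apply, Matrix.smul_apply, smul_eq_mul,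
        Matrix.single, Matrix.of_apply]
      split_ifs <;> norm_num
    · rcases eq_or_ne (j : ℕ) ((i : ℕ) + 1) with hij2 | hij2
      · have e : j.castSucc = i.succ := by rw [hcs]; omega
        rw [e]
        have h5 : i.castSucc ≠ j.succ := by rw [Ne, hcs]; omega
        have h2 : i.succ ≠ j.succ := by simp [Fin.ext_iff]; omega
        have h6 : i.succ ≠ i.castSucc := by simp [Fin.ext_iff]
        rw [Matrix.single_mul_single_of_ne (h := h5), Matrix.single_mul_single_of_ne (h := h2),
          Matrix.single_mul_single_of_ne (h := h6), Matrix.single_mul_single_same]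
        rw [hcar, if_pos (by rw [abs_eq (by norm_num : (0:ℤ) ≤ 1)]; omega)]
        push_cast
        ext a b
        simp only [Matrix.sub_apply, Matrix.zero_apply, Matrix.smul_apply, smul_eq_mul,
          Matrix.single, Matrix.of_apply]
        split_ifs <;> norm_num
      · have h5 : i.castSucc ≠ j.succ := by rw [Ne, hcs]; omega
        have h2 : i.succ ≠ j.succ := by simp [Fin.ext_iff]; omega
        have h3 : j.castSucc ≠ i.castSucc := by simp [Fin.ext_iff]; omega
        have h4 : j.castSucc ≠ i.succ := by rw [Ne, hcs]; omega
        rw [Matrix.single_mul_single_of_ne (h := h5), Matrix.single_mul_single_of_ne (h := h2),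
          Matrix.single_mul_single_of_ne (h := h3), Matrix.single_mul_single_of_ne (h := h4)]
        rw [hcar, if_neg (by rw [abs_eq (by norm_num : (0:ℤ) ≤ 1)]; omega)]
        norm_num

lemma todaH_diag (n : ℕ) (j : Fin n) (a : Fin (n+1)) :
    todaH n j a a = (if j.castSucc = a then (1:ℂ) else 0) - (if j.succ = a then 1 else 0) := by
  simp [todaH, Matrix.single]

lemma sum_smul_todaH_eq_zero {n : ℕ} (c : Fin n → ℂ)
    (h : ∑ j, c j • todaH n j = 0) (i : Fin n) : c i = 0 := by
  have key : ∀ j : Fin n,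
      (∑ a : Fin (n+1), if a ≤ i.castSucc then todaH n j a a else 0)
        = if j = i then 1 else 0 := by
    intro j
    have e1 : ∀ (x : Fin (n+1)),
        (∑ a : Fin (n+1), if a ≤ i.castSucc then (if x = a then (1:ℂ) else 0) else 0)
          = if x ≤ i.castSucc then 1 else 0 := by
      intro x
      rw [Finset.sum_congr rfl (fun a _ =>
        show (if a ≤ i.castSucc then (if x = a then (1:ℂ) else 0) else 0)
          = if x = a then (if a ≤ i.castSucc then 1 else 0) else 0 by
          rcases eq_or_ne x a with rfl | hxa
          · simp
          · simp [hxa])]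
      rw [Finset.sum_ite_eq]
      simp
    calc (∑ a : Fin (n+1), if a ≤ i.castSucc then todaH n j a a else 0)
        = (∑ a : Fin (n+1), ((if a ≤ i.castSucc then (if j.castSucc = a then (1:ℂ) else 0) else 0)
            - (if a ≤ i.castSucc then (if j.succ = a then (1:ℂ) else 0) else 0))) := by
          refine Finset.sum_congr rfl fun a _ => ?_
          rw [todaH_diag]
          split_ifs <;> ring
      _ = (if j.castSucc ≤ i.castSucc then 1 else 0) - (if j.succ ≤ i.castSucc then 1 else 0) := by
          rw [Finset.sum_sub_distrib, e1, e1]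
      _ = if j = i then 1 else 0 := by
          have c1 : j.castSucc ≤ i.castSucc ↔ (j:ℕ) ≤ (i:ℕ) := by rw [Fin.le_def]; simp
          have c2 : j.succ ≤ i.castSucc ↔ (j:ℕ) + 1 ≤ (i:ℕ) := by rw [Fin.le_def]; simp
          have c3 : j = i ↔ (j:ℕ) = (i:ℕ) := Fin.ext_iff
          rcases Nat.lt_trichotomy (j:ℕ) (i:ℕ) with hlt | heq | hgt
          · rw [if_pos (c1.2 (le_of_lt hlt)), if_pos (c2.2 hlt),
              if_neg (fun H => by have := c3.1 H; omega)]; ring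
          · rw [if_pos (c1.2 (le_of_eq heq)), if_neg (fun H => by have := c2.1 H; omega),
              if_pos (c3.2 heq)]; ring
          · rw [if_neg (fun H => by have := c1.1 H; omega),
              if_neg (fun H => by have := c2.1 H; omega),
              if_neg (fun H => by have := c3.1 H; omega)]; ring
  have h1 : ∀ a : Fin (n+1), (∑ j, c j • todaH n j) a a = 0 := by rw [h]; simp
  calc c i = ∑ j, c j * (if j = i then 1 else 0) := by simp
    _ = ∑ j, c j * ∑ a : Fin (n+1), (if a ≤ i.castSucc then todaH n j a a else 0) := by
        refine Finset.sum_congr rfl fun j _ => ?_; rw [key]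
    _ = ∑ a : Fin (n+1), ∑ j, (if a ≤ i.castSucc then c j * todaH n j a a else 0) := by
        rw [Finset.sum_comm]
        refine Finset.sum_congr rfl fun j _ => ?_
        rw [Finset.mul_sum]
        refine Finset.sum_congr rfl fun a _ => ?_
        split_ifs <;> ring
    _ = ∑ a : Fin (n+1), (if a ≤ i.castSucc then (∑ j, c j • todaH n j) a a else 0) := by
        refine Finset.sum_congr rfl fun a _ => ?_
        rw [Matrix.sum_apply]
        simp only [Matrix.smul_apply, smul_eq_mul]
        split_ifs with hc
        · rfl
        · exact Finset.sum_const_zero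
    _ = 0 := by simp [h1]

lemma comm_expand (n : ℕ) (p q : Fin n → ℂ) (a : ℂ) :
    (∑ i, (p i • todaH n i + a • todaEp n i)) * (∑ j, q j • todaEm n j)
      - (∑ j, q j • todaEm n j) * (∑ i, (p i • todaH n i + a • todaEp n i))
    = ∑ j, ((-(∑ i, ((cartan n i j : ℝ) : ℂ) * p i)) * q j) • todaEm n j
      + ∑ j, (a * q j) • todaH n j := by
  calc (∑ i, (p i • todaH n i + a • todaEp n i)) * (∑ j, q j • todaEm n j)
      - (∑ j, q j • todaEm n j) * (∑ i, (p i • todaH n i + a • todaEp n i))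
      = ∑ i, ∑ j, ((p i * q j) • (todaH n i * todaEm n j - todaEm n j * todaH n i)
          + (a * q j) • (todaEp n i * todaEm n j - todaEm n j * todaEp n i)) := by
        rw [Finset.sum_mul, Finset.mul_sum, ← Finset.sum_sub_distrib]
        refine Finset.sum_congr rfl fun i _ => ?_
        rw [Finset.mul_sum, Finset.sum_mul, ← Finset.sum_sub_distrib]
        refine Finset.sum_congr rfl fun j _ => ?_
        simp only [add_mul, mul_add, smul_mul_assoc, mul_smul_comm, smul_smul, smul_sub,
          smul_add, mul_comm (q j)]
        abel
    _ = ∑ i, ∑ j, ((p i * q j * (-(cartan n i j : ℝ) : ℂ)) • todaEm n j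
          + if i = j then (a * q j) • todaH n i else 0) := by
        refine Finset.sum_congr rfl fun i _ => Finset.sum_congr rfl fun j _ => ?_
        rw [bracket_H_Em, bracket_Ep_Em, smul_smul]
        congr 1
        split_ifs with hij
        · subst hij; rfl
        · exact smul_zero _
    _ = (∑ j, ∑ i, (p i * q j * (-(cartan n i j : ℝ) : ℂ)) • todaEm n j)
          + ∑ i, ∑ j, (if i = j then (a * q j) • todaH n i else 0) := by
        simp only [Finset.sum_add_distrib]
        congr 1
        exact Finset.sum_comm
    _ = ∑ j, ((-(∑ i, ((cartan n i j : ℝ) : ℂ) * p i)) * q j) • todaEm n j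
          + ∑ j, (a * q j) • todaH n j := by
        congr 1
        · refine Finset.sum_congr rfl fun j _ => ?_
          rw [← Finset.sum_smul]
          congr 1
          calc ∑ i, p i * q j * (-(cartan n i j : ℝ) : ℂ)
              = ∑ i, -(((cartan n i j : ℝ) : ℂ) * p i * q j) :=
                Finset.sum_congr rfl fun i _ => by ring
            _ = -∑ i, ((cartan n i j : ℝ) : ℂ) * p i * q j := by
                rw [Finset.sum_neg_distrib]
            _ = -(∑ i, ((cartan n i j : ℝ) : ℂ) * p i) * q j := by
                rw [neg_mul, Finset.sum_mul]
        · refine Finset.sum_congr rfl fun i _ => ?_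
          rw [Finset.sum_ite_eq]
          simp

lemma mdz_expand {ι k l : Type*} [Fintype ι] (c : ι → ℂ → ℂ) (M : ι → Matrix k l ℂ) (z : ℂ)
    (hc : ∀ i, DifferentiableAt ℝ (c i) z) :
    mdz (fun w => ∑ i, c i w • M i) z = ∑ i, wdz (c i) z • M i := by
  ext a b
  simp only [mdz, Matrix.of_apply, Matrix.sum_apply, Matrix.smul_apply, smul_eq_mul]
  rw [wdz_sum Finset.univ (fun i w => c i w * M i a b) z (fun i _ => (hc i).mul_const _)]
  exact Finset.sum_congr rfl fun i _ => wdz_mul_const (hc i) _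

lemma mdzbar_expand {ι k l : Type*} [Fintype ι] (c : ι → ℂ → ℂ) (M N : ι → Matrix k l ℂ)
    (z : ℂ) (hc : ∀ i, DifferentiableAt ℝ (c i) z) :
    mdzbar (fun w => ∑ i, (c i w • M i + N i)) z = ∑ i, wdzbar (c i) z • M i := by
  ext a b
  simp only [mdzbar, Matrix.of_apply, Matrix.sum_apply, Matrix.add_apply, Matrix.smul_apply,
    smul_eq_mul]
  rw [wdzbar_sum Finset.univ (fun i w => c i w * M i a b + N i a b) z
    (fun i _ => ((hc i).mul_const _).add_const _)]
  exact Finset.sum_congr rfl fun i _ => wdzbar_mul_const_add_const (hc i) _ _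

lemma sum_combine {ι : Type*} {G : Type*} [AddCommGroup G] (s : Finset ι)
    {A B C D E : ι → G} (h1 : ∀ j ∈ s, A j + C j = 0) (h2 : ∀ i ∈ s, D i - B i = E i) :
    ∑ j ∈ s, A j - ∑ j ∈ s, B j + (∑ j ∈ s, C j + ∑ j ∈ s, D j) = ∑ j ∈ s, E j := by
  have h0 : ∑ j ∈ s, (A j + C j) = 0 := Finset.sum_eq_zero h1
  calc ∑ j ∈ s, A j - ∑ j ∈ s, B j + (∑ j ∈ s, C j + ∑ j ∈ s, D j)
      = ∑ j ∈ s, (A j + C j) + ∑ j ∈ s, (D j - B j) := by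
        rw [Finset.sum_add_distrib, Finset.sum_sub_distrib]; abel
    _ = ∑ j ∈ s, E j := by rw [h0, Finset.sum_congr rfl h2, zero_add]

/-- with `A_z = Σᵢ(∂_zψᵢ Hᵢ + α Eᵢ⁺)` and `A_z̄ = Σᵢ α e^{βφᵢ} Eᵢ⁻`,
where `βφⱼ = Σᵢ k_{ji} ψᵢ`, zero curvature on `Ω` holds iff `∂_z∂_z̄ψᵢ = α² e^{βφᵢ}`
for all `i`; in that case the Toda field equations
`∂_z∂_z̄φⱼ = (α²/β) Σᵢ k_{ji} e^{βφᵢ}` hold. -/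
theorem stmt2 (n : ℕ) (hn : 1 ≤ n) (Ω : Set ℂ) (hΩ : IsOpen Ω)
    (α β : ℝ) (hβ : β ≠ 0)
    (ψ φ : Fin n → ℂ → ℝ)
    (hψ : ∀ i, ContDiffOn ℝ (⊤ : ℕ∞) (ψ i) Ω) (hφ : ∀ i, ContDiffOn ℝ (⊤ : ℕ∞) (φ i) Ω)
    (hrel : ∀ j, ∀ z ∈ Ω, β * φ j z = ∑ i, cartan n j i * ψ i z)
    (Az Azb : ℂ → Matrix (Fin (n + 1)) (Fin (n + 1)) ℂ)
    (hAz : ∀ z, Az z = ∑ i, (wdz (fun w => ((ψ i w : ℝ) : ℂ)) z • todaH n i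
        + (α : ℂ) • todaEp n i))
    (hAzb : ∀ z, Azb z = ∑ i, ((α * Real.exp (β * φ i z) : ℝ) : ℂ) • todaEm n i) :
    ((∀ z ∈ Ω, mdz Azb z - mdzbar Az z + (Az z * Azb z - Azb z * Az z) = 0)
        ↔ (∀ i, ∀ z ∈ Ω,
            wdz (fun w => wdzbar (fun v => ((ψ i v : ℝ) : ℂ)) w) z
              = ((α ^ 2 * Real.exp (β * φ i z) : ℝ) : ℂ)))
      ∧ ((∀ z ∈ Ω, mdz Azb z - mdzbar Az z + (Az z * Azb z - Azb z * Az z) = 0)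
        → ∀ j, ∀ z ∈ Ω,
            wdz (fun w => wdzbar (fun v => ((φ j v : ℝ) : ℂ)) w) z
              = ((α ^ 2 / β : ℝ) : ℂ)
                * ∑ i, ((cartan n j i * Real.exp (β * φ i z) : ℝ) : ℂ)) := by
  have hβc : (β : ℂ) ≠ 0 := by exact_mod_cast hβ
  have hΨ : ∀ i, ContDiffOn ℝ (⊤ : ℕ∞) (fun v => ((ψ i v : ℝ) : ℂ)) Ω :=
    fun i => (Complex.ofRealCLM.contDiff).comp_contDiffOn (hψ i)
  have hΦ : ∀ j, ContDiffOn ℝ (⊤ : ℕ∞) (fun v => ((φ j v : ℝ) : ℂ)) Ω :=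
    fun j => (Complex.ofRealCLM.contDiff).comp_contDiffOn (hφ j)
  have hdφ : ∀ j, ∀ z ∈ Ω, DifferentiableAt ℝ (φ j) z := fun j z hz =>
    ((hφ j).differentiableOn (by simp)).differentiableAt (hΩ.mem_nhds hz)
  have hdΨ : ∀ i, ∀ z ∈ Ω, DifferentiableAt ℝ (fun v => ((ψ i v : ℝ) : ℂ)) z := fun i z hz =>
    (((hΨ i).differentiableOn (by simp)).differentiableAt (hΩ.mem_nhds hz))
  have hdΦ : ∀ j, ∀ z ∈ Ω, DifferentiableAt ℝ (fun v => ((φ j v : ℝ) : ℂ)) z := fun j z hz =>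
    (((hΦ j).differentiableOn (by simp)).differentiableAt (hΩ.mem_nhds hz))
  have hfdΨ : ∀ i, ∀ z ∈ Ω, DifferentiableAt ℝ (fderiv ℝ (fun v => ((ψ i v : ℝ) : ℂ))) z :=
    fun i z hz => (((hΨ i).contDiffAt (hΩ.mem_nhds hz)).fderiv_right (m := 1)
      (WithTop.coe_le_coe.mpr le_top)).differentiableAt one_ne_zero
  have hfdΦ : ∀ j, ∀ z ∈ Ω, DifferentiableAt ℝ (fderiv ℝ (fun v => ((φ j v : ℝ) : ℂ))) z :=
    fun j z hz => (((hΦ j).contDiffAt (hΩ.mem_nhds hz)).fderiv_right (m := 1)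
      (WithTop.coe_le_coe.mpr le_top)).differentiableAt one_ne_zero
  have hrelC : ∀ j, ∀ z ∈ Ω, (fun w => (β : ℂ) * ((φ j w : ℝ) : ℂ)) =ᶠ[nhds z]
      (fun w => ∑ i, ((cartan n j i : ℝ) : ℂ) * ((ψ i w : ℝ) : ℂ)) := by
    intro j z hz
    filter_upwards [hΩ.mem_nhds hz] with w hw
    calc (β : ℂ) * ((φ j w : ℝ) : ℂ) = ((β * φ j w : ℝ) : ℂ) := by push_cast; ring
      _ = ((∑ i, cartan n j i * ψ i w : ℝ) : ℂ) := by rw [hrel j w hw]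
      _ = ∑ i, ((cartan n j i : ℝ) : ℂ) * ((ψ i w : ℝ) : ℂ) := by push_cast; ring
  have hPrel : ∀ j, ∀ z ∈ Ω, (β : ℂ) * wdz (fun v => ((φ j v : ℝ) : ℂ)) z
      = ∑ i, ((cartan n j i : ℝ) : ℂ) * wdz (fun v => ((ψ i v : ℝ) : ℂ)) z := by
    intro j z hz
    rw [← wdz_const_mul (hdΦ j z hz) (β : ℂ), wdz_congr (hrelC j z hz),
      wdz_sum _ _ _ (fun i _ => (hdΨ i z hz).const_mul _)]
    exact Finset.sum_congr rfl fun i _ => wdz_const_mul (hdΨ i z hz) _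
  have hPrelbar : ∀ j, ∀ z ∈ Ω, (β : ℂ) * wdzbar (fun v => ((φ j v : ℝ) : ℂ)) z
      = ∑ i, ((cartan n j i : ℝ) : ℂ) * wdzbar (fun v => ((ψ i v : ℝ) : ℂ)) z := by
    intro j z hz
    rw [← wdzbar_const_mul (hdΦ j z hz) (β : ℂ), wdzbar_congr (hrelC j z hz),
      wdzbar_sum _ _ _ (fun i _ => (hdΨ i z hz).const_mul _)]
    exact Finset.sum_congr rfl fun i _ => wdzbar_const_mul (hdΨ i z hz) _
  have hQd : ∀ j, ∀ z ∈ Ω,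
      DifferentiableAt ℝ (fun w => ((α * Real.exp (β * φ j w) : ℝ) : ℂ)) z :=
    fun j z hz => Complex.ofRealCLM.differentiableAt.comp z
      ((((hdφ j z hz).const_mul β).exp).const_mul α)
  have hQ : ∀ j, ∀ z ∈ Ω, wdz (fun w => ((α * Real.exp (β * φ j w) : ℝ) : ℂ)) z
      = ((α * Real.exp (β * φ j z) : ℝ) : ℂ)
        * ∑ i, ((cartan n j i : ℝ) : ℂ) * wdz (fun v => ((ψ i v : ℝ) : ℂ)) z := by
    intro j z hz
    have e1 : (fun w => ((α * Real.exp (β * φ j w) : ℝ) : ℂ))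
        = fun w => (α : ℂ) * ((Real.exp (β * φ j w) : ℝ) : ℂ) := by
      funext w; push_cast; ring
    have e2 : (fun w => ((β * φ j w : ℝ) : ℂ)) = fun w => (β : ℂ) * ((φ j w : ℝ) : ℂ) := by
      funext w; push_cast; ring
    have hde : DifferentiableAt ℝ (fun w => ((Real.exp (β * φ j w) : ℝ) : ℂ)) z :=
      Complex.ofRealCLM.differentiableAt.comp z ((hdφ j z hz).const_mul β).exp
    rw [e1, wdz_const_mul hde (α : ℂ),
      wdz_exp_comp (fun w => β * φ j w) z ((hdφ j z hz).const_mul β), e2,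
      wdz_const_mul (hdΦ j z hz) (β : ℂ), hPrel j z hz]
    push_cast
    ring
  have hmdzb : ∀ z ∈ Ω, mdzbar Az z
      = ∑ i, wdzbar (fun w => wdz (fun v => ((ψ i v : ℝ) : ℂ)) w) z • todaH n i := by
    intro z hz
    rw [show Az = fun w => ∑ i, (wdz (fun v => ((ψ i v : ℝ) : ℂ)) w • todaH n i
      + (α : ℂ) • todaEp n i) from funext hAz]
    exact mdzbar_expand _ _ _ z (fun i => diffAt_wdz (hfdΨ i z hz))
  have hmdz : ∀ z ∈ Ω, mdz Azb z
      = ∑ j, wdz (fun w => ((α * Real.exp (β * φ j w) : ℝ) : ℂ)) z • todaEm n j := by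
    intro z hz
    rw [show Azb = fun w => ∑ j, ((α * Real.exp (β * φ j w) : ℝ) : ℂ) • todaEm n j
      from funext hAzb]
    exact mdz_expand _ _ z (fun j => hQd j z hz)
  have hcomm : ∀ z : ℂ, Az z * Azb z - Azb z * Az z
      = ∑ j, ((-(∑ i, ((cartan n i j : ℝ) : ℂ) * wdz (fun v => ((ψ i v : ℝ) : ℂ)) z))
            * ((α * Real.exp (β * φ j z) : ℝ) : ℂ)) • todaEm n j
        + ∑ j, ((α : ℂ) * ((α * Real.exp (β * φ j z) : ℝ) : ℂ)) • todaH n j := by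
    intro z
    rw [hAz z, hAzb z]
    exact comm_expand n _ _ _
  have main : ∀ z ∈ Ω, mdz Azb z - mdzbar Az z + (Az z * Azb z - Azb z * Az z)
      = ∑ i, (((α : ℂ) * ((α * Real.exp (β * φ i z) : ℝ) : ℂ))
          - wdzbar (fun w => wdz (fun v => ((ψ i v : ℝ) : ℂ)) w) z) • todaH n i := by
    intro z hz
    rw [hmdz z hz, hmdzb z hz, hcomm z]
    refine sum_combine Finset.univ (fun j _ => ?_) (fun i _ => ?_)
    · rw [← add_smul, hQ j z hz]
      have hsym : (∑ i, ((cartan n i j : ℝ) : ℂ) * wdz (fun v => ((ψ i v : ℝ) : ℂ)) z)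
          = ∑ i, ((cartan n j i : ℝ) : ℂ) * wdz (fun v => ((ψ i v : ℝ) : ℂ)) z :=
        Finset.sum_congr rfl fun i _ => by rw [cartan_symm]
      rw [hsym, show ((α * Real.exp (β * φ j z) : ℝ) : ℂ)
            * (∑ i, ((cartan n j i : ℝ) : ℂ) * wdz (fun v => ((ψ i v : ℝ) : ℂ)) z)
          + -(∑ i, ((cartan n j i : ℝ) : ℂ) * wdz (fun v => ((ψ i v : ℝ) : ℂ)) z)
            * ((α * Real.exp (β * φ j z) : ℝ) : ℂ) = 0 from by ring, zero_smul]
    · rw [sub_smul]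
  have fwd : (∀ z ∈ Ω, mdz Azb z - mdzbar Az z + (Az z * Azb z - Azb z * Az z) = 0)
      → ∀ i, ∀ z ∈ Ω, wdz (fun w => wdzbar (fun v => ((ψ i v : ℝ) : ℂ)) w) z
        = ((α ^ 2 * Real.exp (β * φ i z) : ℝ) : ℂ) := by
    intro h i z hz
    have h0 := h z hz
    rw [main z hz] at h0
    have h1 := sum_smul_todaH_eq_zero _ h0 i
    have h2 : wdzbar (fun w => wdz (fun v => ((ψ i v : ℝ) : ℂ)) w) z
        = (α : ℂ) * ((α * Real.exp (β * φ i z) : ℝ) : ℂ) := (sub_eq_zero.mp h1).symm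
    rw [wdz_wdzbar_comm hΩ (hΨ i) hz, h2]
    push_cast
    ring
  have bwd : (∀ i, ∀ z ∈ Ω, wdz (fun w => wdzbar (fun v => ((ψ i v : ℝ) : ℂ)) w) z
        = ((α ^ 2 * Real.exp (β * φ i z) : ℝ) : ℂ))
      → ∀ z ∈ Ω, mdz Azb z - mdzbar Az z + (Az z * Azb z - Azb z * Az z) = 0 := by
    intro h z hz
    rw [main z hz]
    refine Finset.sum_eq_zero fun i _ => ?_
    have h2 := h i z hz
    rw [wdz_wdzbar_comm hΩ (hΨ i) hz] at h2
    rw [h2, show ((α : ℂ) * ((α * Real.exp (β * φ i z) : ℝ) : ℂ)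
        - ((α ^ 2 * Real.exp (β * φ i z) : ℝ) : ℂ)) = 0 from by push_cast; ring, zero_smul]
  refine ⟨⟨fwd, bwd⟩, ?_⟩
  intro h j z hz
  have hψeq := fwd h
  have hd2 : DifferentiableAt ℝ (fun w => wdzbar (fun v => ((φ j v : ℝ) : ℂ)) w) z :=
    diffAt_wdzbar (hfdΦ j z hz)
  have heq : (fun w => (β : ℂ) * wdzbar (fun v => ((φ j v : ℝ) : ℂ)) w) =ᶠ[nhds z]
      (fun w => ∑ i, ((cartan n j i : ℝ) : ℂ) * wdzbar (fun v => ((ψ i v : ℝ) : ℂ)) w) := by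
    filter_upwards [hΩ.mem_nhds hz] with w hw
    exact hPrelbar j w hw
  have key : (β : ℂ) * wdz (fun w => wdzbar (fun v => ((φ j v : ℝ) : ℂ)) w) z
      = ∑ i, ((cartan n j i : ℝ) : ℂ) * ((α ^ 2 * Real.exp (β * φ i z) : ℝ) : ℂ) := by
    rw [← wdz_const_mul hd2 (β : ℂ), wdz_congr heq,
      wdz_sum _ _ _ (fun i _ => (diffAt_wdzbar (hfdΨ i z hz)).const_mul _)]
    refine Finset.sum_congr rfl fun i _ => ?_
    rw [wdz_const_mul (diffAt_wdzbar (hfdΨ i z hz)) _, hψeq i z hz]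
  apply mul_left_cancel₀ hβc
  rw [key, Finset.mul_sum]
  push_cast
  rw [Finset.mul_sum]
  refine Finset.sum_congr rfl fun i _ => ?_
  field_simp
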